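/- arXiv:0907.2983 — 5 statements merged into one kernel-verified Lean document; each statement's English description precedes it below -/
import Mathlib

section
/- Let H be a complex Hilbert space and T : H → H a bounded linear map that preserves orthogonality, i.e. ⟨x, y⟩ = 0 implies ⟨T x, T y⟩ = 0. Then there exists a nonnegative real number λ such that ⟨T x, T y⟩ = λ ⟨x, y⟩ for all x, y ∈ H. -/
open scoped InnerProductSpace

private lemma key_0 {H : Type*} [NormedAddCommGroup H] [InnerProductSpace ℂ H]
    (T : H →L[ℂ] H)
    (hT : ∀ x y : H, ⟪x, y⟫_ℂ = 0 → ⟪T x, T y⟫_ℂ = 0)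
    {y : H} (hy : y ≠ 0) (x : H) :
    ⟪T x, T y⟫_ℂ = ((‖T y‖ ^ 2 / ‖y‖ ^ 2 : ℝ) : ℂ) * ⟪x, y⟫_ℂ := by
  have hny : (‖y‖ : ℂ) ^ 2 ≠ 0 := by
    simp [hy, norm_eq_zero]
  set c : ℂ := ⟪y, x⟫_ℂ / (‖y‖ : ℂ) ^ 2 with hc
  have horth : ⟪x - c • y, y⟫_ℂ = 0 := by
    rw [inner_sub_left, inner_smul_left, inner_self_eq_norm_sq_to_K, RCLike.ofReal_eq_complex_ofReal]
    rw [hc, map_div₀, ← inner_conj_symm y x, map_pow, Complex.conj_ofReal, Complex.conj_conj]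
    field_simp
    simp [hy]
  have h0 := hT _ _ horth
  rw [map_sub, map_smul, inner_sub_left, inner_smul_left, sub_eq_zero,
    inner_self_eq_norm_sq_to_K, RCLike.ofReal_eq_complex_ofReal] at h0
  rw [h0, hc, map_div₀, ← inner_conj_symm y x, map_pow, Complex.conj_ofReal, Complex.conj_conj]
  push_cast
  field_simp

theorem stmt_0 {H : Type*} [NormedAddCommGroup H] [InnerProductSpace ℂ H] [CompleteSpace H]
    (T : H →L[ℂ] H)
    (hT : ∀ x y : H, ⟪x, y⟫_ℂ = 0 → ⟪T x, T y⟫_ℂ = 0) :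
    ∃ l : ℝ, 0 ≤ l ∧ ∀ x y : H, ⟪T x, T y⟫_ℂ = (l : ℂ) * ⟪x, y⟫_ℂ := by
  set f : H → ℝ := fun y => ‖T y‖ ^ 2 / ‖y‖ ^ 2 with hf
  have hstep : ∀ a b : H, a ≠ 0 → ⟪a, b⟫_ℂ ≠ 0 → f a = f b := by
    intro a b ha hab
    have hb : b ≠ 0 := by rintro rfl; simp at hab
    have h1 : ⟪T a, T b⟫_ℂ = ((f b : ℝ) : ℂ) * ⟪a, b⟫_ℂ := key_0 T hT hb a
    have h2 : ⟪T b, T a⟫_ℂ = ((f a : ℝ) : ℂ) * ⟪b, a⟫_ℂ := key_0 T hT ha b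
    have h3 : ⟪T a, T b⟫_ℂ = ((f a : ℝ) : ℂ) * ⟪a, b⟫_ℂ := by
      have := congrArg (starRingEnd ℂ) h2
      rwa [inner_conj_symm, map_mul, inner_conj_symm, Complex.conj_ofReal] at this
    have : ((f a : ℝ) : ℂ) = ((f b : ℝ) : ℂ) :=
      mul_right_cancel₀ hab (h3.symm.trans h1)
    exact_mod_cast this
  have hconst : ∀ a b : H, a ≠ 0 → b ≠ 0 → f a = f b := by
    intro a b ha hb
    by_cases hab : ⟪a, b⟫_ℂ = 0
    · have h1 : ⟪a, a + b⟫_ℂ ≠ 0 := by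
        rw [inner_add_right, hab, add_zero]
        simpa using ha
      have h2 : ⟪b, a + b⟫_ℂ ≠ 0 := by
        have hba : ⟪b, a⟫_ℂ = 0 := by rw [← inner_conj_symm, hab, map_zero]
        rw [inner_add_right, hba, zero_add]
        simpa using hb
      exact (hstep a (a + b) ha h1).trans (hstep b (a + b) hb h2).symm
    · exact hstep a b ha hab
  by_cases hH : ∃ v : H, v ≠ 0
  · obtain ⟨v, hv⟩ := hH
    refine ⟨f v, by positivity, ?_⟩
    intro x y
    by_cases hy : y = 0
    · simp [hy]
    · rw [key_0 T hT hy x]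
      have : ‖T y‖ ^ 2 / ‖y‖ ^ 2 = f y := rfl
      rw [this, hconst v y hv hy]
  · push_neg at hH
    refine ⟨0, le_refl _, ?_⟩
    intro x y
    simp [hH x, hH y]
end

section
/- Let H be a complex Hilbert space and T : H → H a bounded linear orthogonality-preserving map. Then T = c • V for some nonnegative real c and a linear isometry V : H → H. -/
open scoped InnerProductSpace

lemma aux1 {H : Type*} [NormedAddCommGroup H] [InnerProductSpace ℂ H]
    (T : H →L[ℂ] H)
    (hT : ∀ x y : H, ⟪x, y⟫_ℂ = 0 → ⟪T x, T y⟫_ℂ = 0)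
    (x y : H) (hx : ‖x‖ = 1) (hy : ‖y‖ = 1) (hxy : ⟪x, y⟫_ℂ = 0) :
    ‖T x‖ = ‖T y‖ := by
  have hyx : ⟪y, x⟫_ℂ = 0 := by
    rw [← inner_conj_symm, hxy, map_zero]
  have h1 : ⟪x + y, x - y⟫_ℂ = 0 := by
    rw [inner_sub_right, inner_add_left, inner_add_left, hxy, hyx,
      inner_self_eq_norm_sq_to_K, inner_self_eq_norm_sq_to_K, hx, hy]
    ring
  have h2 := hT _ _ h1
  have hTxy := hT x y hxy
  have hTyx := hT y x hyx
  simp only [map_add, map_sub, inner_sub_right, inner_add_left] at h2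
  rw [hTxy, hTyx, inner_self_eq_norm_sq_to_K, inner_self_eq_norm_sq_to_K] at h2
  rw [add_zero, zero_add, sub_eq_zero] at h2
  have hr : (‖T x‖ : ℝ) ^ 2 = ‖T y‖ ^ 2 := by exact_mod_cast h2
  nlinarith [norm_nonneg (T x), norm_nonneg (T y)]

lemma aux2 {H : Type*} [NormedAddCommGroup H] [InnerProductSpace ℂ H]
    (T : H →L[ℂ] H)
    (hT : ∀ x y : H, ⟪x, y⟫_ℂ = 0 → ⟪T x, T y⟫_ℂ = 0)
    (x y : H) (hx : ‖x‖ = 1) (hy : ‖y‖ = 1) :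
    ‖T x‖ = ‖T y‖ := by
  set α : ℂ := ⟪x, y⟫_ℂ with hα
  set w : H := y - α • x with hw
  have hxw : ⟪x, w⟫_ℂ = 0 := by
    rw [hw, inner_sub_right, inner_smul_right, inner_self_eq_norm_sq_to_K, hx]
    simp [hα]
  by_cases hw0 : w = 0
  · have hyax : y = α • x := by
      have := hw0; rw [hw, sub_eq_zero] at this; exact this
    have hαn : ‖α‖ = 1 := by
      have : ‖y‖ = ‖α‖ * ‖x‖ := by rw [hyax, norm_smul]
      rw [hx, hy, mul_one] at this; exact this.symm
    rw [hyax, map_smul, norm_smul, hαn, one_mul]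
  · set z : H := (‖w‖ : ℂ)⁻¹ • w with hz
    have hwn : (‖w‖ : ℂ) ≠ 0 := by
      simp [norm_eq_zero, hw0]
    have hzn : ‖z‖ = 1 := by
      rw [hz, norm_smul]
      simp [norm_eq_zero, hw0]
    have hxz : ⟪x, z⟫_ℂ = 0 := by
      rw [hz, inner_smul_right, hxw, mul_zero]
    have h1 : ‖T x‖ = ‖T z‖ := aux1 T hT x z hx hzn hxz
    have hdecomp : y = α • x + (‖w‖ : ℂ) • z := by
      rw [hz, smul_smul, mul_inv_cancel₀ hwn, one_smul, hw]
      abel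
    have horth : ⟪α • x, (‖w‖ : ℂ) • z⟫_ℂ = 0 := by
      rw [inner_smul_left, inner_smul_right, hxz]; ring
    have horthT : ⟪α • T x, (‖w‖ : ℂ) • T z⟫_ℂ = 0 := by
      rw [inner_smul_left, inner_smul_right, hT x z hxz]; ring
    have hy2 : ‖y‖ * ‖y‖ = ‖α • x‖ * ‖α • x‖ + ‖(‖w‖ : ℂ) • z‖ * ‖(‖w‖ : ℂ) • z‖ := by
      rw [hdecomp]; exact norm_add_sq_eq_norm_sq_add_norm_sq_of_inner_eq_zero _ _ horth
    have hTy : T y = α • T x + (‖w‖ : ℂ) • T z := by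
      rw [hdecomp]; simp
    have hTy2 : ‖T y‖ * ‖T y‖ =
        ‖α • T x‖ * ‖α • T x‖ + ‖(‖w‖ : ℂ) • T z‖ * ‖(‖w‖ : ℂ) • T z‖ := by
      rw [hTy]; exact norm_add_sq_eq_norm_sq_add_norm_sq_of_inner_eq_zero _ _ horthT
    have key : ‖T y‖ * ‖T y‖ = ‖T x‖ * ‖T x‖ := by
      rw [hTy2]
      simp only [norm_smul, ← h1]
      rw [hy, one_mul] at hy2
      simp only [norm_smul, hx, hzn, mul_one] at hy2
      nlinarith [hy2]
    nlinarith [norm_nonneg (T x), norm_nonneg (T y), key]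

theorem stmt_1 {H : Type*} [NormedAddCommGroup H] [InnerProductSpace ℂ H] [CompleteSpace H]
    (T : H →L[ℂ] H)
    (hT : ∀ x y : H, ⟪x, y⟫_ℂ = 0 → ⟪T x, T y⟫_ℂ = 0) :
    ∃ (c : ℝ) (V : H →ₗᵢ[ℂ] H), 0 ≤ c ∧ ∀ x : H, T x = c • V x := by
  by_cases htriv : ∀ x : H, x = 0
  · exact ⟨0, LinearIsometry.id, le_refl 0, fun x => by rw [htriv x]; simp⟩
  push_neg at htriv
  obtain ⟨x₀, hx₀⟩ := htriv
  set u : H := (‖x₀‖ : ℂ)⁻¹ • x₀ with hu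
  have hx₀n : (‖x₀‖ : ℂ) ≠ 0 := by simp [norm_eq_zero, hx₀]
  have hun : ‖u‖ = 1 := by
    rw [hu, norm_smul]; simp [norm_eq_zero, hx₀]
  clear_value u
  set c : ℝ := ‖T u‖ with hc
  have hnorm : ∀ x : H, ‖T x‖ = c * ‖x‖ := by
    intro x
    by_cases hx : x = 0
    · simp [hx]
    have hxn : (‖x‖ : ℂ) ≠ 0 := by simp [norm_eq_zero, hx]
    have h1 : ‖(‖x‖ : ℂ)⁻¹ • x‖ = 1 := by
      rw [norm_smul]; simp [norm_eq_zero, hx]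
    have h2 := aux2 T hT u ((‖x‖ : ℂ)⁻¹ • x) hun h1
    have hxeq : x = (‖x‖ : ℂ) • ((‖x‖ : ℂ)⁻¹ • x) := by
      rw [smul_smul, mul_inv_cancel₀ hxn, one_smul]
    calc ‖T x‖ = ‖(‖x‖ : ℂ) • T ((‖x‖ : ℂ)⁻¹ • x)‖ := by
          conv_lhs => rw [hxeq]
          rw [map_smul]
      _ = ‖x‖ * ‖T ((‖x‖ : ℂ)⁻¹ • x)‖ := by
          rw [norm_smul]; simp
      _ = c * ‖x‖ := by rw [← h2, ← hc]; ring
  have hc0 : 0 ≤ c := norm_nonneg _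
  rcases eq_or_lt_of_le hc0 with hceq | hcpos
  · refine ⟨0, LinearIsometry.id, le_refl 0, fun x => ?_⟩
    have : ‖T x‖ = 0 := by rw [hnorm x, ← hceq, zero_mul]
    simp [norm_eq_zero.mp this]
  · refine ⟨c, ⟨(c : ℂ)⁻¹ • (T : H →ₗ[ℂ] H), fun x => ?_⟩, hc0, fun x => ?_⟩
    · simp only [LinearMap.smul_apply, norm_smul, ContinuousLinearMap.coe_coe]
      rw [hnorm x]
      simp only [norm_inv, Complex.norm_real, Real.norm_eq_abs, abs_of_pos hcpos]
      field_simp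
    · simp only [LinearIsometry.coe_mk, LinearMap.smul_apply, ContinuousLinearMap.coe_coe]
      rw [RCLike.real_smul_eq_coe_smul (K := ℂ), smul_smul]
      have h1 : (RCLike.ofReal c : ℂ) = Complex.ofReal c := rfl
      rw [h1, ← Complex.ofReal_inv, ← Complex.ofReal_mul,
        mul_inv_cancel₀ (ne_of_gt hcpos)]
      simp
end

section
/- Let H be a complex Hilbert space, T : H → H a bounded linear orthogonality-preserving operator, and x ∈ H a nonzero vector. If the adjoint composition satisfies T*T(x) = λ_x • x + z with ⟨x, z⟩ = 0, then z = 0 and λ_x is a nonnegative real number. -/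
open scoped InnerProductSpace

theorem stmt_3 {H : Type*} [NormedAddCommGroup H] [InnerProductSpace ℂ H] [CompleteSpace H]
    (T : H →L[ℂ] H)
    (hT : ∀ x y : H, ⟪x, y⟫_ℂ = 0 → ⟪T x, T y⟫_ℂ = 0)
    (x z : H) (hx : x ≠ 0) (lx : ℂ)
    (hortho : ⟪x, z⟫_ℂ = 0)
    (heq : (ContinuousLinearMap.adjoint T) (T x) = lx • x + z) :
    z = 0 ∧ ∃ r : ℝ, 0 ≤ r ∧ lx = (r : ℂ) := by
  have h1 : ⟪T x, T z⟫_ℂ = 0 := hT x z hortho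
  have h2 : ⟪(ContinuousLinearMap.adjoint T) (T x), z⟫_ℂ = 0 := by
    rw [ContinuousLinearMap.adjoint_inner_left]; exact h1
  rw [heq] at h2
  rw [inner_add_left, inner_smul_left, hortho, mul_zero, zero_add] at h2
  have hz : z = 0 := inner_self_eq_zero.mp h2
  refine ⟨hz, ?_⟩
  subst hz
  rw [add_zero] at heq
  have h3 : ⟪(ContinuousLinearMap.adjoint T) (T x), x⟫_ℂ = ‖T x‖ ^ 2 := by
    rw [ContinuousLinearMap.adjoint_inner_left, inner_self_eq_norm_sq_to_K]; norm_cast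
  rw [heq, inner_smul_left, inner_self_eq_norm_sq_to_K] at h3
  have hxn : (‖x‖ : ℂ) ^ 2 ≠ 0 := by
    simp [pow_eq_zero_iff, norm_eq_zero, hx]
  have hconj : (starRingEnd ℂ) lx = (‖T x‖ : ℂ) ^ 2 / (‖x‖ : ℂ) ^ 2 := by
    field_simp at h3 ⊢
    have hx' : (‖x‖ : ℂ) ≠ 0 := fun h => hxn (by rw [h]; ring)
    field_simp
    linear_combination h3
  have hlx : lx = (‖T x‖ : ℂ) ^ 2 / (‖x‖ : ℂ) ^ 2 := by
    have := congrArg (starRingEnd ℂ) hconj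
    simpa using this
  refine ⟨‖T x‖ ^ 2 / ‖x‖ ^ 2, by positivity, ?_⟩
  rw [hlx]; push_cast; ring
end

section
/- Let A = C₀((0,1], ℂ) and suppose T : A → A is multiplication by a bounded continuous function f on (0,1] such that for all nonzero g, h ∈ A one has ⟨T g, T h⟩ / (‖T g‖ ‖T h‖) = ⟨g, h⟩ / (‖g‖ ‖h‖) (with ⟨g, h⟩ = g·h̅). Then |f| is a constant function; in particular T is a positive scalar multiple of an isometric module map. -/
open scoped ZeroAtInfty

noncomputable def g0 : C₀(Set.Ioc (0:ℝ) 1, ℂ) where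
  toFun := fun t => ((t : ℝ) : ℂ)
  continuous_toFun := by continuity
  zero_at_infty' := by
    rw [Metric.tendsto_nhds]
    intro ε hε
    rw [Filter.hasBasis_cocompact.eventually_iff]
    refine ⟨Subtype.val ⁻¹' Set.Icc ε 1, ?_, ?_⟩
    · rw [Topology.IsInducing.subtypeVal.isCompact_preimage_iff]
      · exact isCompact_Icc
      · exact fun x hx => ⟨⟨x, lt_of_lt_of_le hε hx.1, hx.2⟩, rfl⟩
    · intro t ht
      simp only [Set.mem_compl_iff, Set.mem_preimage, Set.mem_Icc, not_and, not_le] at ht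
      have h1 : (t : ℝ) < ε := by
        by_cases h : ε ≤ (t : ℝ)
        · exact absurd (ht h) (not_lt.2 t.2.2)
        · linarith [not_le.1 h]
      have h0 : (0:ℝ) < (t : ℝ) := t.2.1
      simp only [Set.mem_setOf_eq, dist_zero_right, Complex.norm_real, Real.norm_eq_abs]
      rwa [abs_of_pos h0]

theorem stmt_6 (f : C(Set.Ioc (0:ℝ) 1, ℂ)) (hf : ∃ C : ℝ, ∀ t, ‖f t‖ ≤ C)
    (T : C₀(Set.Ioc (0:ℝ) 1, ℂ) → C₀(Set.Ioc (0:ℝ) 1, ℂ))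
    (hT : ∀ (g : C₀(Set.Ioc (0:ℝ) 1, ℂ)) (t : Set.Ioc (0:ℝ) 1), T g t = f t * g t)
    (hconf : ∀ g h : C₀(Set.Ioc (0:ℝ) 1, ℂ), g ≠ 0 → h ≠ 0 →
      ∀ t : Set.Ioc (0:ℝ) 1,
        T g t * star (T h t) / ((‖T g‖ * ‖T h‖ : ℝ) : ℂ) =
          g t * star (h t) / ((‖g‖ * ‖h‖ : ℝ) : ℂ)) :
    (∀ s t : Set.Ioc (0:ℝ) 1, ‖f s‖ = ‖f t‖) ∧
    ∃ c : ℝ, 0 < c ∧ ∀ g : C₀(Set.Ioc (0:ℝ) 1, ℂ), ‖T g‖ = c * ‖g‖ := by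
  -- key step: from the conformality identity applied with g = h at a point where h ≠ 0,
  -- conclude |f t| * ‖h‖ = ‖T h‖ and ‖T h‖ ≠ 0.
  have key : ∀ (h : C₀(Set.Ioc (0:ℝ) 1, ℂ)), h ≠ 0 → ∀ t : Set.Ioc (0:ℝ) 1, h t ≠ 0 →
      ‖f t‖ * ‖h‖ = ‖T h‖ ∧ ‖T h‖ ≠ 0 := by
    intro h hh t hht
    have heq := hconf h h hh hh t
    rw [hT h t] at heq
    rw [Complex.star_def, Complex.mul_conj, Complex.mul_conj] at heq
    have habs : Complex.normSq (f t * h t) / (‖T h‖ * ‖T h‖) =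
        Complex.normSq (h t) / (‖h‖ * ‖h‖) := by exact_mod_cast heq
    rw [Complex.normSq_eq_norm_sq, Complex.normSq_eq_norm_sq, norm_mul, mul_pow] at habs
    simp only [sq] at habs
    have hM : (0:ℝ) < ‖h‖ := norm_pos_iff.2 hh
    have hNnn : (0:ℝ) ≤ ‖T h‖ := norm_nonneg _
    have habspos : (0:ℝ) < ‖h t‖ := norm_pos_iff.2 hht
    have hN : ‖T h‖ ≠ 0 := by
      intro h0
      rw [h0] at habs
      simp only [mul_zero, div_zero] at habs
      have : ‖h t‖ * ‖h t‖ / (‖h‖ * ‖h‖) > 0 := by positivity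
      rw [← habs] at this
      exact lt_irrefl 0 this
    have hNpos : (0:ℝ) < ‖T h‖ := lt_of_le_of_ne hNnn (Ne.symm hN)
    constructor
    · -- from habs: (|f t| |h t|)² / N² = |h t|² / M²
      have h1 : (‖f t‖ * ‖h t‖) * (‖f t‖ * ‖h t‖)
          * (‖h‖ * ‖h‖) = (‖h t‖ * ‖h t‖) * (‖T h‖ * ‖T h‖) := by
        field_simp at habs
        linear_combination (‖h t‖ ^ 2) * habs
      have hne : ‖h t‖ * ‖h t‖ ≠ 0 := by positivity
      have h1' : (‖f t‖ * ‖h‖) * (‖f t‖ * ‖h‖) = ‖T h‖ * ‖T h‖ :=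
        mul_left_cancel₀ hne (by linear_combination h1)
      have h2 : (‖f t‖ * ‖h‖ - ‖T h‖) * (‖f t‖ * ‖h‖ + ‖T h‖) = 0 := by
        linear_combination h1'
      rcases mul_eq_zero.1 h2 with h3 | h3
      · linarith
      · nlinarith [norm_nonneg (f t), hM.le, hNpos]
    · exact hN
  -- the explicit nowhere-vanishing function g0
  have hg0ne : g0 ≠ 0 := by
    intro h0
    have : g0 ⟨1, by norm_num⟩ = 0 := by rw [h0]; rfl
    simp [g0] at this
  have hg0t : ∀ t : Set.Ioc (0:ℝ) 1, g0 t ≠ 0 := by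
    intro t
    simp only [g0, ZeroAtInftyContinuousMap.coe_mk, ContinuousMap.coe_mk, ne_eq,
      Complex.ofReal_eq_zero]
    exact ne_of_gt t.2.1
  have hg0norm : (0:ℝ) < ‖g0‖ := norm_pos_iff.2 hg0ne
  set c : ℝ := ‖T g0‖ / ‖g0‖ with hc
  have hcpos : 0 < c := by
    have := (key g0 hg0ne ⟨1, by norm_num⟩ (hg0t _)).2
    have h' : (0:ℝ) < ‖T g0‖ := lt_of_le_of_ne (norm_nonneg _) (Ne.symm this)
    positivity
  have hfc : ∀ t : Set.Ioc (0:ℝ) 1, ‖f t‖ = c := by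
    intro t
    have := (key g0 hg0ne t (hg0t t)).1
    rw [hc, eq_div_iff (ne_of_gt hg0norm)]
    linarith
  refine ⟨fun s t => by rw [hfc s, hfc t], c, hcpos, ?_⟩
  intro g
  by_cases hg : g = 0
  · subst hg
    have hT0 : T 0 = 0 := by
      ext t
      rw [hT 0 t]
      simp
    rw [hT0]
    simp
  · -- pick a point where g is nonzero
    have : ∃ t, g t ≠ 0 := by
      by_contra hcon
      push_neg at hcon
      exact hg (by ext t; simpa using hcon t)
    obtain ⟨t, ht⟩ := this
    have := (key g hg t ht).1
    rw [hfc t] at this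
    linarith
end

section
/- Let A = ℂ ⊕ ℂ, viewed as the unital commutative C*-algebra C(X, ℂ) with X a two-point space, acting on the Hilbert A-module M = ℂ ⊕ ℂ, and let e = (1,0), f = (0,1), so that e·f = 0. Let λ_e, λ_f be positive reals. If ‖⟨(e+f)x,(e+f)y⟩‖/(‖(e+f)x‖·‖(e+f)y‖) = ‖⟨(λ_e e+λ_f f)x,(λ_e e+λ_f f)y⟩‖/(‖(λ_e e+λ_f f)x‖·‖(λ_e e+λ_f f)y‖) for all x, y in M, then λ_e = λ_f. -/
/-- Componentwise `A`-valued inner product on `M = ℂ × ℂ` viewed as a Hilbert module over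
`A = ℂ × ℂ`. -/
noncomputable def innerCC (x y : ℂ × ℂ) : ℂ × ℂ :=
  (x.1 * (starRingEnd ℂ) y.1, x.2 * (starRingEnd ℂ) y.2)

theorem stmt_19 (lam_e lam_f : ℝ) (h_e : 0 < lam_e) (h_f : 0 < lam_f)
    (e f : ℂ × ℂ) (he : e = (1, 0)) (hf : f = (0, 1))
    (hconf : ∀ x y : ℂ × ℂ, x ≠ 0 → y ≠ 0 →
      ‖innerCC ((e + f) * x) ((e + f) * y)‖ / (‖(e + f) * x‖ * ‖(e + f) * y‖) =
        ‖innerCC ((lam_e • e + lam_f • f) * x) ((lam_e • e + lam_f • f) * y)‖ /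
          (‖(lam_e • e + lam_f • f) * x‖ * ‖(lam_e • e + lam_f • f) * y‖)) :
    lam_e = lam_f := by
  subst he hf
  have h1 := hconf (1,1) (1,0) (by simp) (by simp [Prod.ext_iff])
  have h2 := hconf (1,1) (0,1) (by simp) (by simp [Prod.ext_iff])
  simp [innerCC, Prod.norm_def, Prod.mk_mul_mk, Prod.smul_mk, Complex.norm_real,
    abs_of_pos h_e, abs_of_pos h_f, sup_of_le_left (mul_self_nonneg lam_e),
    sup_of_le_left h_e.le, sup_of_le_right (mul_self_nonneg lam_f),
    sup_of_le_right h_f.le] at h1 h2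
  rcases le_total lam_e lam_f with h | h
  · rw [sup_eq_right.2 h] at h1
    field_simp at h1
    exact h1.symm
  · rw [sup_eq_left.2 h] at h2
    field_simp at h2
    exact h2
end
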